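/- arXiv:0807.1595 — 4 statements merged into one kernel-verified Lean document; each statement's English description precedes it below -/
import Mathlib

section
/- Let (V,j,⟨·,·⟩) be an anti-Kaehlerian vector space and R : V × V × V → V a trilinear curvature-like tensor. Suppose G is a connected Lie subgroup of SO_AK(V), G_W is a compact connected subgroup of SO(W) for a totally real positive-definite subspace W of V with G = (G_W)^ℂ, and R_W := pr_W ∘ R|_{W×W×W} is G_W-symmetric, i.e., R_W(gw₁,gw₂)gw₃ = g R_W(w₁,w₂)w₃ for all g ∈ G_W, wᵢ ∈ W. If moreover R commutes appropriately with j (j∘R(v₁,v₂) = R(jv₁,v₂) = R(v₁,v₂)∘j) and R is the complexification of R_W, then R is G-symmetric: R(gv₁,gv₂)gv₃ = g R(v₁,v₂)v₃ for all g ∈ G and vᵢ ∈ V. -/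
open NormedSpace

/-!
Differentiating `R (e^{tA} x) (e^{tA} y) (e^{tA} z) = e^{tA} R(x, y, z)` at `t = 0` shows that each
`A ∈ 𝔥` acts on `R` as a derivation on `W³`. Both `R` and `A` are `j`-linear and `V = W ⊕ jW`, so
the derivation identity holds on all of `V³`, and then also for `A + jA'`. This infinitesimal
statement replaces the identity theorem: integrating it back (the curve
`t ↦ e^{-tC} R (e^{tC} x) (e^{tC} y) (e^{tC} z)` has zero derivative) gives symmetry under every
generator `exp (A + jA')` of `G`, and the symmetries of `R` form a subgroup.
-/

section Trilinear

variable {E : Type*} [NormedAddCommGroup E] [NormedSpace ℝ E]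

def IsSymmetricUnder (R : E →ₗ[ℝ] E →ₗ[ℝ] E →ₗ[ℝ] E) (g : E →L[ℝ] E) : Prop :=
  ∀ x y z, R (g x) (g y) (g z) = g (R x y z)

def IsInfinitesimalSymmetry (R : E →ₗ[ℝ] E →ₗ[ℝ] E →ₗ[ℝ] E) (C : E →L[ℝ] E) : Prop :=
  ∀ x y z, R (C x) y z + R x (C y) z + R x y (C z) = C (R x y z)

def IsComplexTrilinear (R : E →ₗ[ℝ] E →ₗ[ℝ] E →ₗ[ℝ] E) (j : E →L[ℝ] E) : Prop :=
  (∀ x y z, R (j x) y z = j (R x y z)) ∧ (∀ x y z, R x (j y) z = j (R x y z)) ∧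
    ∀ x y z, R x y (j z) = j (R x y z)

theorem HasDerivAt.linearMap_comp [FiniteDimensional ℝ E] {G : Type*} [NormedAddCommGroup G]
    [NormedSpace ℝ G] (L : E →ₗ[ℝ] G) {f : ℝ → E} {f' : E} {t : ℝ} (hf : HasDerivAt f f' t) :
    HasDerivAt (fun s => L (f s)) (L f') t :=
  (LinearMap.toContinuousLinearMap L).hasFDerivAt.comp_hasDerivAt t hf

theorem HasDerivAt.trilinear [FiniteDimensional ℝ E] {F : Type*} [NormedAddCommGroup F]
    [NormedSpace ℝ F] (R : E →ₗ[ℝ] E →ₗ[ℝ] E →ₗ[ℝ] F) {f g h : ℝ → E} {f' g' h' : E} {t : ℝ}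
    (hf : HasDerivAt f f' t) (hg : HasDerivAt g g' t) (hh : HasDerivAt h h' t) :
    HasDerivAt (fun s => R (f s) (g s) (h s))
      (R f' (g t) (h t) + R (f t) g' (h t) + R (f t) (g t) h') t := by
  -- `R'` is kept opaque: unfolding the `toContinuousLinearMap` composite in unification times out.
  obtain ⟨R', hR'⟩ : ∃ R' : E →ₗ[ℝ] E →L[ℝ] E →L[ℝ] F, ∀ a b c, R' a b c = R a b c :=
    ⟨(LinearMap.toContinuousLinearMap : (E →ₗ[ℝ] E →L[ℝ] F) ≃ₗ[ℝ] _).toLinearMap ∘ₗ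
        R.compr₂ (LinearMap.toContinuousLinearMap : (E →ₗ[ℝ] F) ≃ₗ[ℝ] _).toLinearMap,
      fun _ _ _ => rfl⟩
  have hR'f : HasDerivAt (fun s => R' (f s)) (R' f') t :=
    HasDerivAt.linearMap_comp (G := E →L[ℝ] E →L[ℝ] F) R' hf
  have := (hR'f.clm_apply hg).clm_apply hh
  simpa [hR', add_assoc] using this

theorem hasDerivAt_trilinear_exp_smul [FiniteDimensional ℝ E] (R : E →ₗ[ℝ] E →ₗ[ℝ] E →ₗ[ℝ] E)
    (C : E →L[ℝ] E) (x y z : E) (t : ℝ) :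
    HasDerivAt (fun s : ℝ => R (exp (s • C) x) (exp (s • C) y) (exp (s • C) z))
      (R (exp (t • C) (C x)) (exp (t • C) y) (exp (t • C) z)
        + R (exp (t • C) x) (exp (t • C) (C y)) (exp (t • C) z)
        + R (exp (t • C) x) (exp (t • C) y) (exp (t • C) (C z))) t := by
  have hexp (v : E) : HasDerivAt (fun s : ℝ => exp (s • C) v) (exp (t • C) (C v)) t := by
    simpa using (hasDerivAt_exp_smul_const C t).clm_apply (hasDerivAt_const t v)
  exact (hexp x).trilinear R (hexp y) (hexp z)

theorem derivation_identity_of_forall_exp_smul [FiniteDimensional ℝ E]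
    (R : E →ₗ[ℝ] E →ₗ[ℝ] E →ₗ[ℝ] E) (C : E →L[ℝ] E) (x y z : E)
    (h : ∀ t : ℝ, R (exp (t • C) x) (exp (t • C) y) (exp (t • C) z) = exp (t • C) (R x y z)) :
    R (C x) y z + R x (C y) z + R x y (C z) = C (R x y z) := by
  have hlhs := hasDerivAt_trilinear_exp_smul R C x y z 0
  have hrhs := (hasDerivAt_exp_smul_const C (0 : ℝ)).clm_apply (hasDerivAt_const (0 : ℝ) (R x y z))
  simp only [funext h, zero_smul, exp_zero] at hlhs hrhs
  simpa using hlhs.unique hrhs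

theorem IsInfinitesimalSymmetry.isSymmetricUnder_exp [FiniteDimensional ℝ E]
    {R : E →ₗ[ℝ] E →ₗ[ℝ] E →ₗ[ℝ] E} {C : E →L[ℝ] E} (hC : IsInfinitesimalSymmetry R C) :
    IsSymmetricUnder R (exp C) := by
  intro x y z
  set F : ℝ → E := fun s => exp (s • -C) (R (exp (s • C) x) (exp (s • C) y) (exp (s • C) z))
  have hF : ∀ t, HasDerivAt F 0 t := by
    intro t
    have hcomm (v : E) : exp (t • C) (C v) = C (exp (t • C) v) := by
      rw [← mul_apply_eq_comp, ← mul_apply_eq_comp, (((Commute.refl C).smul_right t).exp_right).eq]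
    have := (hasDerivAt_exp_smul_const (-C) t).clm_apply (hasDerivAt_trilinear_exp_smul R C x y z t)
    rw [hcomm, hcomm, hcomm, hC] at this
    simpa [F] using this
  have hF_const : F 1 = F 0 :=
    is_const_of_deriv_eq_zero (fun t => (hF t).differentiableAt) (fun t => (hF t).deriv) 1 0
  have hinv : exp C * exp (-C) = 1 := by
    rw [← exp_add_of_commute_of_mem_ball (𝕂 := ℝ) (Commute.refl C).neg_right
      (by simp [expSeries_radius_eq_top]) (by simp [expSeries_radius_eq_top]), add_neg_cancel,
      exp_zero]
  simp only [F, one_smul, zero_smul, exp_zero, one_apply_eq_self] at hF_const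
  rw [← hF_const, ← mul_apply_eq_comp, hinv, one_apply_eq_self]

theorem IsInfinitesimalSymmetry.add {R : E →ₗ[ℝ] E →ₗ[ℝ] E →ₗ[ℝ] E} {C D : E →L[ℝ] E}
    (hC : IsInfinitesimalSymmetry R C) (hD : IsInfinitesimalSymmetry R D) :
    IsInfinitesimalSymmetry R (C + D) := by
  intro x y z
  simp only [add_apply, map_add, LinearMap.add_apply, ← hC x y z, ← hD x y z]
  abel

theorem IsInfinitesimalSymmetry.comp_left {R : E →ₗ[ℝ] E →ₗ[ℝ] E →ₗ[ℝ] E} {j C : E →L[ℝ] E}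
    (hR : IsComplexTrilinear R j) (hC : IsInfinitesimalSymmetry R C) :
    IsInfinitesimalSymmetry R (j ∘L C) := by
  obtain ⟨h₁, h₂, h₃⟩ := hR
  intro x y z
  simp only [ContinuousLinearMap.coe_comp, Function.comp_apply, h₁, h₂, h₃, ← hC x y z, map_add]

theorem apply_eq_zero_of_forall_mem {j : E →L[ℝ] E} {W : Submodule ℝ E}
    (hspan : W ⊔ W.map (j : E →ₗ[ℝ] E) = ⊤) {f : E → E} (hadd : ∀ u v, f (u + v) = f u + f v)
    (hj : ∀ v, f (j v) = j (f v)) (hW : ∀ w ∈ W, f w = 0) (v : E) : f v = 0 := by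
  obtain ⟨a, ha, _, ⟨b, hb, rfl⟩, rfl⟩ :=
    Submodule.mem_sup.1 (hspan ▸ Submodule.mem_top : v ∈ W ⊔ W.map (j : E →ₗ[ℝ] E))
  rw [ContinuousLinearMap.coe_coe, hadd, hj, hW a ha, hW b hb, map_zero, add_zero]

theorem IsInfinitesimalSymmetry.of_forall_mem {R : E →ₗ[ℝ] E →ₗ[ℝ] E →ₗ[ℝ] E}
    {j C : E →L[ℝ] E} {W : Submodule ℝ E} (hspan : W ⊔ W.map (j : E →ₗ[ℝ] E) = ⊤)
    (hR : IsComplexTrilinear R j) (hCj : C ∘L j = j ∘L C)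
    (hW : ∀ x ∈ W, ∀ y ∈ W, ∀ z ∈ W, R (C x) y z + R x (C y) z + R x y (C z) = C (R x y z)) :
    IsInfinitesimalSymmetry R C := by
  obtain ⟨h₁, h₂, h₃⟩ := hR
  have hCj' (v : E) : C (j v) = j (C v) := DFunLike.congr_fun hCj v
  set D : E → E → E → E := fun x y z => R (C x) y z + R x (C y) z + R x y (C z) - C (R x y z)
  have hDj₁ (x y z : E) : D (j x) y z = j (D x y z) := by simp only [D, hCj', h₁, map_add, map_sub]
  have hDj₂ (x y z : E) : D x (j y) z = j (D x y z) := by simp only [D, hCj', h₂, map_add, map_sub]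
  have hDj₃ (x y z : E) : D x y (j z) = j (D x y z) := by simp only [D, hCj', h₃, map_add, map_sub]
  have hD₃ (x : E) (hx : x ∈ W) (y : E) (hy : y ∈ W) (z : E) : D x y z = 0 :=
    apply_eq_zero_of_forall_mem hspan (fun _ _ => by simp only [D, map_add]; abel) (hDj₃ x y)
      (fun z hz => sub_eq_zero.2 (hW x hx y hy z hz)) z
  have hD₂ (x : E) (hx : x ∈ W) (y z : E) : D x y z = 0 :=
    apply_eq_zero_of_forall_mem hspan (f := fun y => D x y z)
      (fun _ _ => by simp only [D, map_add, LinearMap.add_apply]; abel) (hDj₂ x · z)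
      (fun y hy => hD₃ x hx y hy z) y
  intro x y z
  exact sub_eq_zero.1 (apply_eq_zero_of_forall_mem hspan (f := fun x => D x y z)
    (fun _ _ => by simp only [D, map_add, LinearMap.add_apply]; abel) (hDj₁ · y z)
    (fun x hx => hD₂ x hx y z) x)

def symmetrySubgroup (R : E →ₗ[ℝ] E →ₗ[ℝ] E →ₗ[ℝ] E) : Subgroup (E →L[ℝ] E)ˣ where
  carrier := {g | IsSymmetricUnder R g}
  one_mem' _ _ _ := rfl
  mul_mem' {g h} hg hh x y z := by
    simp only [Units.val_mul, mul_apply_eq_comp, hg _ _ _, hh x y z]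
  inv_mem' {g} hg x y z := by
    have hcancel (v : E) : (g : E →L[ℝ] E) ((↑g⁻¹ : E →L[ℝ] E) v) = v := by
      rw [← mul_apply_eq_comp, Units.mul_inv, one_apply_eq_self]
    have h := hg ((↑g⁻¹ : E →L[ℝ] E) x) ((↑g⁻¹ : E →L[ℝ] E) y) ((↑g⁻¹ : E →L[ℝ] E) z)
    rw [hcancel, hcancel, hcancel] at h
    rw [h, ← mul_apply_eq_comp, Units.inv_mul, one_apply_eq_self]

end Trilinear

theorem stmt_4_general {V : Type*} [NormedAddCommGroup V] [NormedSpace ℝ V] [FiniteDimensional ℝ V]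
    (j : V →L[ℝ] V)
    (W : Submodule ℝ V) (hcompl : IsCompl W (W.map (j : V →ₗ[ℝ] V)))
    (R : V →ₗ[ℝ] V →ₗ[ℝ] V →ₗ[ℝ] V)
    (hRanti : ∀ x y : V, R x y = - R y x)
    (hjR : ∀ x y z : V, j (R x y z) = R (j x) y z ∧ j (R x y z) = R x y (j z))
    (𝔥 : Submodule ℝ (V →L[ℝ] V))
    (h𝔥j : ∀ A ∈ 𝔥, A ∘L j = j ∘L A)
    (GW G : Subgroup (V →L[ℝ] V)ˣ)
    (hGW : (GW : Set (V →L[ℝ] V)ˣ) = {g : (V →L[ℝ] V)ˣ | ∃ A ∈ 𝔥, (g : V →L[ℝ] V) = exp A})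
    (hG : G = Subgroup.closure
      {g : (V →L[ℝ] V)ˣ | ∃ A ∈ 𝔥, ∃ A' ∈ 𝔥, (g : V →L[ℝ] V) = exp (A + j ∘L A')})
    (hsymW : ∀ g ∈ GW, ∀ x ∈ W, ∀ y ∈ W, ∀ z ∈ W,
      R ((g : V →L[ℝ] V) x) ((g : V →L[ℝ] V) y) ((g : V →L[ℝ] V) z)
        = (g : V →L[ℝ] V) (R x y z)) :
    ∀ g ∈ G, ∀ x y z : V,
      R ((g : V →L[ℝ] V) x) ((g : V →L[ℝ] V) y) ((g : V →L[ℝ] V) z)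
        = (g : V →L[ℝ] V) (R x y z) := by
  have hR : IsComplexTrilinear R j := by
    refine ⟨fun x y z => (hjR x y z).1.symm, fun x y z => ?_, fun x y z => (hjR x y z).2.symm⟩
    rw [hRanti, LinearMap.neg_apply, ← (hjR y x z).1, ← map_neg, ← LinearMap.neg_apply, ← hRanti]
  have h𝔥 (A : V →L[ℝ] V) (hA : A ∈ 𝔥) : IsInfinitesimalSymmetry R A := by
    refine .of_forall_mem hcompl.sup_eq_top hR (h𝔥j A hA) fun x hx y hy z hz =>
      derivation_identity_of_forall_exp_smul R A x y z fun t => ?_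
    obtain ⟨u, hu⟩ := isUnit_exp_of_mem_ball (𝕂 := ℝ) (x := t • A)
      (by simp [expSeries_radius_eq_top])
    have hu_mem : u ∈ GW := by
      rw [← SetLike.mem_coe, hGW]
      exact ⟨t • A, 𝔥.smul_mem t hA, hu⟩
    simpa only [hu] using hsymW u hu_mem x hx y hy z hz
  suffices G ≤ symmetrySubgroup R from fun g hg => this hg
  rw [hG, Subgroup.closure_le]
  rintro g ⟨A, hA, A', hA', hg⟩
  change IsSymmetricUnder R g
  rw [hg]
  exact ((h𝔥 A hA).add ((h𝔥 A' hA').comp_left hR)).isSymmetricUnder_exp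

/-- If the restriction `R_W` of a curvature-like tensor `R` (compatible with `j` and equal
to the complexification of `R_W`) is symmetric with respect to a compact connected group
`G_W ⊆ SO(W)`, and `G` is the complexification of `G_W` (generated by exponentials of
`𝔥 ⊕ j𝔥`, where `𝔥` is the Lie algebra of `G_W` extended complex-linearly), then `R` is
symmetric with respect to `G`. -/
theorem stmt_4 {V : Type*} [NormedAddCommGroup V] [NormedSpace ℝ V] [FiniteDimensional ℝ V]
    (j : V →L[ℝ] V) (hj : j ∘L j = -1)
    (B : LinearMap.BilinForm ℝ V)
    (hsymm : ∀ x y : V, B x y = B y x)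
    (hnd : ∀ x : V, (∀ y : V, B x y = 0) → x = 0)
    (hanti : ∀ x y : V, B (j x) (j y) = - B x y)
    (W : Submodule ℝ V) (hcompl : IsCompl W (W.map (j : V →ₗ[ℝ] V)))
    (hWperp : ∀ x ∈ W, ∀ y ∈ W, B x (j y) = 0)
    (hpos : ∀ x ∈ W, x ≠ 0 → 0 < B x x)
    (R : V →ₗ[ℝ] V →ₗ[ℝ] V →ₗ[ℝ] V)
    (hRanti : ∀ x y : V, R x y = - R y x)
    (hRpair : ∀ x y z w : V, B (R x y z) w = B (R z w x) y)
    (hBianchi : ∀ x y z : V, R x y z + R y z x + R z x y = 0)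
    (hjR : ∀ x y z : V, j (R x y z) = R (j x) y z ∧ j (R x y z) = R x y (j z))
    (hRW : ∀ x ∈ W, ∀ y ∈ W, ∀ z ∈ W, R x y z ∈ W)
    (𝔥 : Submodule ℝ (V →L[ℝ] V))
    (h𝔥j : ∀ A ∈ 𝔥, A ∘L j = j ∘L A)
    (h𝔥W : ∀ A ∈ 𝔥, ∀ w ∈ W, A w ∈ W)
    (h𝔥skew : ∀ A ∈ 𝔥, ∀ x y : V, B (A x) y = - B x (A y))
    (GW G : Subgroup (V →L[ℝ] V)ˣ)
    (hGWcompact : IsCompact (GW : Set (V →L[ℝ] V)ˣ))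
    (hGWconn : IsConnected (GW : Set (V →L[ℝ] V)ˣ))
    (hGW : (GW : Set (V →L[ℝ] V)ˣ) = {g : (V →L[ℝ] V)ˣ | ∃ A ∈ 𝔥, (g : V →L[ℝ] V) = exp A})
    (hG : G = Subgroup.closure
      {g : (V →L[ℝ] V)ˣ | ∃ A ∈ 𝔥, ∃ A' ∈ 𝔥, (g : V →L[ℝ] V) = exp (A + j ∘L A')})
    (hsymW : ∀ g ∈ GW, ∀ x ∈ W, ∀ y ∈ W, ∀ z ∈ W,
      R ((g : V →L[ℝ] V) x) ((g : V →L[ℝ] V) y) ((g : V →L[ℝ] V) z)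
        = (g : V →L[ℝ] V) (R x y z)) :
    ∀ g ∈ G, ∀ x y z : V,
      R ((g : V →L[ℝ] V) x) ((g : V →L[ℝ] V) y) ((g : V →L[ℝ] V) z)
        = (g : V →L[ℝ] V) (R x y z) :=
  stmt_4_general j W hcompl R hRanti hjR 𝔥 h𝔥j GW G hGW hG hsymW
end

section
/- Let (V, j, ⟨·,·⟩) be an anti-Kaehlerian vector space, R a curvature-like tensor on V satisfying j∘R(v₁,v₂) = R(jv₁,v₂) = R(v₁,v₂)∘j, and suppose R is symmetric with respect to the group G^R generated by the transformations exp(R(v₁,v₂)). Define 𝔏 := 𝔤^R ⊕ V with bracket [A₁,A₂] = A₁A₂ − A₂A₁ for A₁,A₂ ∈ 𝔤^R, [v₁,v₂] = R(v₁,v₂) for v₁,v₂ ∈ V, and [A,v] = A(v), and √−1-multiplication √−1·v = jv, √−1·R(v₁,v₂) = j∘R(v₁,v₂). Then (𝔏, [·,·]) is a complex Lie algebra and the map ρ with ρ|_{𝔤^R} = id, ρ|_V = −id is a complex involution of 𝔏. -/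
attribute [local instance 100] LieRing.ofAssociativeRing

/-!
The Lie algebra `𝔤^R` generated by the `R x y` consists of derivations of `R`: derivations form
a Lie subalgebra, and the generators are derivations by the symmetry of `R`. It commutes with `j`
and is stable under `A ↦ j * A`, since both properties pass from the generators to brackets.
On `𝔤^R × V`, the `𝔤^R`-component of the Jacobi identity is the Jacobi identity of `End V`
together with the derivation property, and the `V`-component is the first Bianchi identity.
The bracket is `j`-linear because `j * R x y = R (j x) y` and `j` commutes with `𝔤^R`, and
`ρ` is an automorphism because the bracket is even in the `V`-variables.
-/

section LieSpan

variable {K A : Type*} [CommRing K] [Ring A] [Algebra K A] {s : Set A} {a : A}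

theorem commute_of_mem_lieSpan (hs : ∀ b ∈ s, Commute a b) {b : A}
    (hb : b ∈ LieSubalgebra.lieSpan K A s) : Commute a b := by
  have : LieSubalgebra.lieSpan K A s ≤
      lieSubalgebraOfSubalgebra K A (Subalgebra.centralizer K {a}) :=
    LieSubalgebra.lieSpan_le.mpr fun b hb ↦ Subalgebra.mem_centralizer_iff K |>.mpr
      fun c hc ↦ by rw [Set.mem_singleton_iff.mp hc]; exact (hs b hb).eq
  exact (Subalgebra.mem_centralizer_iff K).mp (this hb) a rfl

theorem mul_mem_lieSpan_of_commute (hs : ∀ b ∈ s, Commute a b)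
    (has : ∀ b ∈ s, a * b ∈ LieSubalgebra.lieSpan K A s) {b : A}
    (hb : b ∈ LieSubalgebra.lieSpan K A s) : a * b ∈ LieSubalgebra.lieSpan K A s := by
  induction hb using LieSubalgebra.lieSpan_induction with
  | mem b hb => exact has b hb
  | zero => simp
  | add b c _ _ hb hc => simpa [mul_add] using LieSubalgebra.add_mem _ hb hc
  | smul r b _ hb => simpa [mul_smul_comm] using LieSubalgebra.smul_mem _ r hb
  | lie b c _ hc hb _ =>
    have hac : a * ⁅b, c⁆ = ⁅a * b, c⁆ := by
      simp only [Ring.lie_def, mul_sub, ← mul_assoc, (commute_of_mem_lieSpan hs hc).eq]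
    rw [hac]
    exact LieSubalgebra.lie_mem _ hb hc

end LieSpan

section Curvature

variable {K V : Type*} [CommRing K] [AddCommGroup V] [Module K V]
  (R : V →ₗ[K] V →ₗ[K] Module.End K V)

def curvatureDerivations : LieSubalgebra K (Module.End K V) where
  carrier := {A | ∀ x y, ⁅A, R x y⁆ = R (A x) y + R x (A y)}
  zero_mem' := by simp
  add_mem' {A B} hA hB x y := by
    simp only [add_lie, hA x y, hB x y, LinearMap.add_apply, map_add]
    abel
  smul_mem' c A hA x y := by simp [hA x y]
  lie_mem' {A B} hA hB x y := by
    rw [lie_lie, hA x y, hB x y, lie_add, lie_add, hA, hA, hB, hB]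
    simp only [Ring.lie_def, map_sub, LinearMap.sub_apply, Module.End.mul_apply]
    abel

def curvatureAlgebra : LieSubalgebra K (Module.End K V) :=
  LieSubalgebra.lieSpan K (Module.End K V) {A | ∃ x y, A = R x y}

theorem apply_mem_curvatureAlgebra (x y : V) : R x y ∈ curvatureAlgebra R :=
  LieSubalgebra.subset_lieSpan ⟨x, y, rfl⟩

theorem curvatureAlgebra_le_curvatureDerivations
    (hsym : ∀ a b x y z : V,
      R a b (R x y z) - R x y (R a b z) = R (R a b x) y z + R x (R a b y) z) :
    curvatureAlgebra R ≤ curvatureDerivations R := by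
  refine LieSubalgebra.lieSpan_le.mpr ?_
  rintro _ ⟨a, b, rfl⟩ x y
  ext z
  exact hsym a b x y z

variable {R} {j : Module.End K V}

theorem commute_of_mem_curvatureAlgebra (hjR_comm : ∀ x y, Commute j (R x y))
    {A : Module.End K V} (hA : A ∈ curvatureAlgebra R) : Commute j A :=
  commute_of_mem_lieSpan (by rintro _ ⟨x, y, rfl⟩; exact hjR_comm x y) hA

theorem mul_mem_curvatureAlgebra (hjR_comm : ∀ x y, Commute j (R x y))
    (hjR_mul : ∀ x y, j * R x y = R (j x) y) {A : Module.End K V}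
    (hA : A ∈ curvatureAlgebra R) : j * A ∈ curvatureAlgebra R :=
  mul_mem_lieSpan_of_commute (by rintro _ ⟨x, y, rfl⟩; exact hjR_comm x y)
    (by rintro _ ⟨x, y, rfl⟩; rw [hjR_mul]; exact apply_mem_curvatureAlgebra R _ _) hA

end Curvature

section Bracket

variable {K V : Type*} [CommRing K] [AddCommGroup V] [Module K V]
  {R : V →ₗ[K] V →ₗ[K] Module.End K V} {g : LieSubalgebra K (Module.End K V)}

variable (R g) in
def curvatureBracket (hg : ∀ x y, R x y ∈ g) : g × V →ₗ[K] g × V →ₗ[K] g × V :=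
  LinearMap.mk₂ K
    (fun X Y ↦ (⁅X.1, Y.1⁆ + ⟨R X.2 Y.2, hg _ _⟩,
      (X.1 : Module.End K V) Y.2 - (Y.1 : Module.End K V) X.2))
    (fun X X' Y ↦ by
      ext : 2 <;>
        simp only [Prod.fst_add, Prod.snd_add, AddMemClass.coe_add, LieSubalgebra.coe_bracket,
          add_lie, map_add, LinearMap.add_apply] <;>
        abel)
    (fun c X Y ↦ by ext : 2 <;> simp [smul_sub])
    (fun X Y Y' ↦ by
      ext : 2 <;>
        simp only [Prod.fst_add, Prod.snd_add, AddMemClass.coe_add, LieSubalgebra.coe_bracket,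
          lie_add, map_add, LinearMap.add_apply] <;>
        abel)
    (fun c X Y ↦ by ext : 2 <;> simp [smul_sub])

variable (hg : ∀ x y, R x y ∈ g)

@[simp]
theorem curvatureBracket_fst_coe (X Y : g × V) :
    ((curvatureBracket R g hg X Y).1 : Module.End K V) =
      ⁅(X.1 : Module.End K V), (Y.1 : Module.End K V)⁆ + R X.2 Y.2 :=
  rfl

@[simp]
theorem curvatureBracket_snd (X Y : g × V) :
    (curvatureBracket R g hg X Y).2 = (X.1 : Module.End K V) Y.2 - (Y.1 : Module.End K V) X.2 :=
  rfl

theorem curvatureBracket_swap (hR : ∀ x y, R x y = -R y x) (X Y : g × V) :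
    curvatureBracket R g hg X Y = -curvatureBracket R g hg Y X := by
  ext : 2
  · simp [hR X.2, add_comm]
  · simp

theorem curvatureBracket_leibniz (hR : ∀ x y, R x y = -R y x)
    (hBianchi : ∀ x y z, R x y z + R y z x + R z x y = 0) (hder : g ≤ curvatureDerivations R)
    (X Y Z : g × V) :
    curvatureBracket R g hg X (curvatureBracket R g hg Y Z) =
      curvatureBracket R g hg (curvatureBracket R g hg X Y) Z +
        curvatureBracket R g hg Y (curvatureBracket R g hg X Z) := by
  obtain ⟨⟨A, hA⟩, u⟩ := X
  obtain ⟨⟨B, hB⟩, v⟩ := Y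
  obtain ⟨⟨C, hC⟩, w⟩ := Z
  ext : 2
  · have hCuv : ⁅R u v, C⁆ = -R (C u) v - R u (C v) := by
      rw [← lie_skew, hder hC u v, neg_add']
    simp only [curvatureBracket_fst_coe, curvatureBracket_snd, Prod.fst_add, AddMemClass.coe_add,
      lie_add, add_lie, lie_lie, hder hA v w, hder hB u w, hCuv,
      map_sub, LinearMap.sub_apply, hR (C u) v]
    abel
  · have hBianchi' : R v w u = R u w v - R u v w := by
      rw [hR u w, eq_sub_iff_add_eq, LinearMap.neg_apply, eq_neg_iff_add_eq_zero,
        ← hBianchi u v w]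
      abel
    simp only [curvatureBracket_fst_coe, curvatureBracket_snd, Prod.snd_add, LinearMap.add_apply,
      Ring.lie_def, LinearMap.sub_apply, Module.End.mul_apply, map_sub, hBianchi']
    abel

theorem curvatureBracket_prodMap {j : Module.End K V} (J : g →ₗ[K] g)
    (hJ : ∀ A, (J A : Module.End K V) = j * A) (hjg : ∀ A : g, Commute j A)
    (hjR_mul : ∀ x y, j * R x y = R (j x) y) (X Y : g × V) :
    curvatureBracket R g hg (J.prodMap j X) Y = J.prodMap j (curvatureBracket R g hg X Y) := by
  obtain ⟨A, u⟩ := X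
  obtain ⟨B, v⟩ := Y
  ext : 2
  · simp only [curvatureBracket_fst_coe, LinearMap.prodMap_apply, hJ, mul_add, hjR_mul,
      Ring.lie_def, mul_sub, ← mul_assoc, (hjg B).eq]
  · simp only [curvatureBracket_snd, LinearMap.prodMap_apply, hJ, Module.End.mul_apply,
      map_sub]
    exact congr_arg _ (LinearMap.congr_fun (hjg B).eq u).symm

theorem curvatureBracket_neg_neg (A B : g) (u v : V) :
    curvatureBracket R g hg (A, -u) (B, -v) =
      ((curvatureBracket R g hg (A, u) (B, v)).1, -(curvatureBracket R g hg (A, u) (B, v)).2) := by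
  ext : 2
  · simp
  · simp only [curvatureBracket_snd, map_neg, sub_neg_eq_add, neg_sub]
    abel

end Bracket

-- The `G^R`-symmetry of `R` is encoded infinitesimally by `hsym`: each `R a b` acts on `R` as a
-- derivation.
theorem stmt_13_general {V : Type*} [AddCommGroup V] [Module ℝ V]
    (j : Module.End ℝ V) (hj : j ∘ₗ j = -LinearMap.id)
    (R : V →ₗ[ℝ] V →ₗ[ℝ] Module.End ℝ V)
    (hRanti : ∀ x y : V, R x y = - R y x)
    (hBianchi : ∀ x y z : V, R x y z + R y z x + R z x y = 0)
    (hjR : ∀ x y : V, j ∘ₗ R x y = R (j x) y ∧ R x y ∘ₗ j = j ∘ₗ R x y)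
    (hsym : ∀ a b x y z : V,
      R a b (R x y z) - R x y (R a b z) = R (R a b x) y z + R x (R a b y) z) :
    ∃ gR : LieSubalgebra ℝ (Module.End ℝ V),
      gR = LieSubalgebra.lieSpan ℝ (Module.End ℝ V) {A | ∃ x y : V, A = R x y} ∧
      (∀ x y : V, R x y ∈ gR) ∧
      ∃ (br : (gR × V) →ₗ[ℝ] (gR × V) →ₗ[ℝ] (gR × V))
        (Iop : (gR × V) →ₗ[ℝ] (gR × V)) (ρ : (gR × V) →ₗ[ℝ] (gR × V)),
        (∀ A A' : gR, br (A, 0) (A', 0) = (⁅A, A'⁆, 0)) ∧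
        (∀ (A : gR) (v : V), br (A, 0) ((0 : gR), v) = ((0 : gR), (A : Module.End ℝ V) v)) ∧
        (∀ v w : V, (br ((0 : gR), v) ((0 : gR), w)).2 = 0 ∧
          ((br ((0 : gR), v) ((0 : gR), w)).1 : Module.End ℝ V) = R v w) ∧
        (∀ X Y : gR × V, br X Y = - br Y X) ∧
        (∀ X Y Z : gR × V, br X (br Y Z) = br (br X Y) Z + br Y (br X Z)) ∧
        (Iop ∘ₗ Iop = -LinearMap.id) ∧
        (∀ v : V, Iop ((0 : gR), v) = ((0 : gR), j v)) ∧
        (∀ A : gR, (Iop (A, (0 : V))).2 = 0 ∧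
          ((Iop (A, (0 : V))).1 : Module.End ℝ V) = j ∘ₗ (A : Module.End ℝ V)) ∧
        (∀ X Y : gR × V, br (Iop X) Y = Iop (br X Y)) ∧
        (∀ (A : gR) (v : V), ρ (A, v) = (A, -v)) ∧
        (∀ X Y : gR × V, ρ (br X Y) = br (ρ X) (ρ Y)) ∧
        (ρ ∘ₗ Iop = Iop ∘ₗ ρ) := by
  have hjR_comm : ∀ x y, Commute j (R x y) := fun x y ↦ (hjR x y).2.symm
  have hjR_mul : ∀ x y, j * R x y = R (j x) y := fun x y ↦ (hjR x y).1
  have hj_mul : j * j = -1 := hj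
  let gR := curvatureAlgebra R
  have hgR := apply_mem_curvatureAlgebra R
  have hjg : ∀ A : gR, Commute j A := fun A ↦ commute_of_mem_curvatureAlgebra hjR_comm A.2
  let Jg : gR →ₗ[ℝ] gR :=
    (LinearMap.mulLeft ℝ j).restrict fun _ ↦ mul_mem_curvatureAlgebra hjR_comm hjR_mul
  have hJg : ∀ A, (Jg A : Module.End ℝ V) = j * A := fun _ ↦ rfl
  refine ⟨gR, rfl, hgR, curvatureBracket R gR hgR, Jg.prodMap j,
    LinearMap.id.prodMap (-LinearMap.id), ?_, ?_, ?_, curvatureBracket_swap hgR hRanti,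
    curvatureBracket_leibniz hgR hRanti hBianchi
      (curvatureAlgebra_le_curvatureDerivations R hsym), ?_, ?_, ?_,
    curvatureBracket_prodMap hgR Jg hJg hjg hjR_mul, ?_, ?_, ?_⟩
  · intro A A'
    ext : 2 <;> simp
  · intro A v
    ext : 2 <;> simp
  · intro v w
    simp
  · refine LinearMap.ext fun X ↦ Prod.ext (Subtype.ext ?_) ?_
    · simp only [LinearMap.comp_apply, LinearMap.prodMap_apply, hJg, ← mul_assoc, hj_mul]
      simp
    · simpa using LinearMap.congr_fun hj X.2
  · intro v
    ext : 2 <;> simp [Jg]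
  · exact fun A ↦ ⟨map_zero j, hJg A⟩
  · intro A v
    simp
  · rintro ⟨A, u⟩ ⟨B, v⟩
    simp [curvatureBracket_neg_neg]
  · ext <;> simp

/-- Given an anti-Kaehlerian space `(V, j, B)` and a curvature-like tensor `R`
compatible with `j` and symmetric with respect to `𝔤^R` (the Lie algebra generated by
the `R(v₁,v₂)`, the symmetry being expressed infinitesimally by the derivation
property of the generators), the space `𝔏 = 𝔤^R ⊕ V` with the indicated bracket and
`√-1`-multiplication is a complex Lie algebra, and `ρ = id ⊕ (-id)` is a complex
involution of `𝔏`. -/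
theorem stmt_13 {V : Type*} [AddCommGroup V] [Module ℝ V]
    (j : Module.End ℝ V) (hj : j ∘ₗ j = -LinearMap.id)
    (B : LinearMap.BilinForm ℝ V)
    (hsymm : ∀ x y : V, B x y = B y x)
    (hanti : ∀ x y : V, B (j x) (j y) = - B x y)
    (R : V →ₗ[ℝ] V →ₗ[ℝ] Module.End ℝ V)
    (hRanti : ∀ x y : V, R x y = - R y x)
    (hRpair : ∀ x y z w : V, B (R x y z) w = B (R z w x) y)
    (hRskew : ∀ x y z w : V, B (R x y z) w = - B (R x y w) z)
    (hBianchi : ∀ x y z : V, R x y z + R y z x + R z x y = 0)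
    (hjR : ∀ x y : V, j ∘ₗ R x y = R (j x) y ∧ R x y ∘ₗ j = j ∘ₗ R x y)
    (hsym : ∀ a b x y z : V,
      R a b (R x y z) - R x y (R a b z) = R (R a b x) y z + R x (R a b y) z) :
    ∃ gR : LieSubalgebra ℝ (Module.End ℝ V),
      gR = LieSubalgebra.lieSpan ℝ (Module.End ℝ V) {A | ∃ x y : V, A = R x y} ∧
      (∀ x y : V, R x y ∈ gR) ∧
      ∃ (br : (gR × V) →ₗ[ℝ] (gR × V) →ₗ[ℝ] (gR × V))
        (Iop : (gR × V) →ₗ[ℝ] (gR × V)) (ρ : (gR × V) →ₗ[ℝ] (gR × V)),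
        (∀ A A' : gR, br (A, 0) (A', 0) = (⁅A, A'⁆, 0)) ∧
        (∀ (A : gR) (v : V), br (A, 0) ((0 : gR), v) = ((0 : gR), (A : Module.End ℝ V) v)) ∧
        (∀ v w : V, (br ((0 : gR), v) ((0 : gR), w)).2 = 0 ∧
          ((br ((0 : gR), v) ((0 : gR), w)).1 : Module.End ℝ V) = R v w) ∧
        (∀ X Y : gR × V, br X Y = - br Y X) ∧
        (∀ X Y Z : gR × V, br X (br Y Z) = br (br X Y) Z + br Y (br X Z)) ∧
        (Iop ∘ₗ Iop = -LinearMap.id) ∧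
        (∀ v : V, Iop ((0 : gR), v) = ((0 : gR), j v)) ∧
        (∀ A : gR, (Iop (A, (0 : V))).2 = 0 ∧
          ((Iop (A, (0 : V))).1 : Module.End ℝ V) = j ∘ₗ (A : Module.End ℝ V)) ∧
        (∀ X Y : gR × V, br (Iop X) Y = Iop (br X Y)) ∧
        (∀ (A : gR) (v : V), ρ (A, v) = (A, -v)) ∧
        (∀ X Y : gR × V, ρ (br X Y) = br (ρ X) (ρ Y)) ∧
        (ρ ∘ₗ Iop = Iop ∘ₗ ρ) :=
  stmt_13_general j hj R hRanti hBianchi hjR hsym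
end

section
/- Let M be a submanifold of a real analytic manifold N, and suppose f is a real holomorphic vector field on a complex manifold P (i.e., f − √−1 J f is holomorphic, where J is the complex structure). If L ⊆ P is a totally real submanifold with dim_ℝ L = dim_ℂ P and f vanishes on L, then f vanishes identically on the connected component of P containing L. -/
/-!
Near a point `p₀` of `U ∩ ℝⁿ`, freeing one coordinate at a time and applying the one-variable
identity theorem along real segments (which accumulate at every real point) shows that `f`
vanishes on a polydisc around `p₀`. Restricting to complex lines, the set where `f` vanishes
locally is then relatively closed in `U`; being open, it contains the connected component.
-/

open Set Filter Topology Metric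

theorem Complex.frequently_im_eq_zero_nhdsNE {c : ℂ} (hc : c.im = 0) :
    ∃ᶠ w in 𝓝[≠] c, w.im = 0 := by
  have hreal : Tendsto (fun t : ℝ => c + t) (𝓝[≠] 0) (𝓝[≠] c) := by
    refine tendsto_nhdsWithin_of_tendsto_nhds_of_eventually_within _ ?_ ?_
    · exact tendsto_nhdsWithin_of_tendsto_nhds
        ((continuous_const.add Complex.continuous_ofReal).tendsto' 0 c (by simp))
    · filter_upwards [self_mem_nhdsWithin] with t ht
      simpa using ht
  exact hreal.frequently (Eventually.of_forall fun t => by simp [hc]).frequently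

section IdentityTheorem

variable {E F : Type*} [NormedAddCommGroup E] [NormedSpace ℂ E]
  [NormedAddCommGroup F] [NormedSpace ℂ F] [CompleteSpace F]

theorem DifferentiableOn.eqOn_zero_of_im_eq_zero {g : ℂ → F} {V : Set ℂ}
    (hg : DifferentiableOn ℂ g V) (hVo : IsOpen V) (hVc : IsPreconnected V) {c : ℂ} (hc : c ∈ V)
    (hc_im : c.im = 0) (hgV : ∀ w ∈ V, w.im = 0 → g w = 0) : EqOn g 0 V := by
  refine (hg.analyticOnNhd hVo).eqOn_zero_of_preconnected_of_frequently_eq_zero hVc hc ?_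
  refine ((Complex.frequently_im_eq_zero_nhdsNE hc_im).and_eventually
    (eventually_nhdsWithin_of_eventually_nhds (hVo.mem_nhds hc))).mono ?_
  exact fun w ⟨hw_im, hwV⟩ => hgV w hwV hw_im

theorem DifferentiableOn.eqOn_zero_ball_of_im_eq_zero {ι : Type*} [Fintype ι]
    {f : (ι → ℂ) → F} {p : ι → ℂ} {r : ℝ} (hf : DifferentiableOn ℂ f (ball p r))
    (hp : ∀ k, (p k).im = 0) (hf_real : ∀ z ∈ ball p r, (∀ k, (z k).im = 0) → f z = 0) :
    EqOn f 0 (ball p r) := by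
  classical
  suffices ∀ s : Finset ι, ∀ z ∈ ball p r, (∀ k ∉ s, (z k).im = 0) → f z = 0 from
    fun z hz => this Finset.univ z hz (by simp)
  intro s
  induction s using Finset.induction_on with
  | empty => exact fun z hz hz_real => hf_real z hz fun k => hz_real k (Finset.notMem_empty k)
  | insert a s _ ih =>
    intro z hz hz_real
    have hr : 0 < r := pos_of_mem_ball hz
    have hupdate : MapsTo (Function.update z a) (ball (p a) r) (ball p r) := by
      intro w hw
      refine mem_ball.2 ((dist_pi_lt_iff hr).2 fun k => ?_)
      rcases eq_or_ne k a with rfl | hka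
      · simpa using hw
      · simpa [hka] using (dist_le_pi_dist z p k).trans_lt hz
    have hslice_diff : DifferentiableOn ℂ (f ∘ Function.update z a) (ball (p a) r) :=
      hf.comp (fun w _ => (hasFDerivAt_update z w).differentiableAt.differentiableWithinAt)
        hupdate
    have hslice : EqOn (f ∘ Function.update z a) 0 (ball (p a) r) := by
      refine hslice_diff.eqOn_zero_of_im_eq_zero isOpen_ball (convex_ball _ _).isPreconnected
        (mem_ball_self hr) (hp a) fun w hw hw_im => ih _ (hupdate hw) fun k hk => ?_
      rcases eq_or_ne k a with rfl | hka
      · simpa using hw_im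
      · simpa [hka] using hz_real k (by simp [hka, hk])
    simpa using hslice (mem_ball.2 ((dist_le_pi_dist z p a).trans_lt hz))

theorem DifferentiableOn.eqOn_zero_of_convex_of_eventuallyEq_zero {f : E → F} {V : Set E}
    (hf : DifferentiableOn ℂ f V) (hVo : IsOpen V) (hVc : Convex ℝ V) {q : E} (hq : q ∈ V)
    (hfq : f =ᶠ[𝓝 q] 0) : EqOn f 0 V := by
  intro z hz
  set line : ℂ → E := fun t => q + t • (z - q)
  have hline : Continuous line := by fun_prop
  set S := line ⁻¹' V
  have hSc : Convex ℝ S :=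
    (hVc.translate_preimage_right q).is_linear_preimage
      ((LinearMap.toSpanSingleton ℂ E (z - q)).restrictScalars ℝ).isLinear
  have hg : AnalyticOnNhd ℂ (f ∘ line) S :=
    (hf.comp (by fun_prop) (mapsTo_preimage line V)).analyticOnNhd (hVo.preimage hline)
  have hg0 : f ∘ line =ᶠ[𝓝 0] 0 := by
    have : Tendsto line (𝓝 0) (𝓝 q) := by simpa [line] using hline.tendsto 0
    exact this.eventually hfq
  simpa [line] using hg.eqOn_zero_of_preconnected_of_eventuallyEq_zero hSc.isPreconnected
    (by simpa [S, line] using hq) hg0 (show (1 : ℂ) ∈ S by simpa [S, line] using hz)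

theorem DifferentiableOn.eqOn_zero_of_isPreconnected_of_eventuallyEq_zero {f : E → F}
    {U C : Set E} (hf : DifferentiableOn ℂ f U) (hU : IsOpen U) (hC : IsPreconnected C)
    (hCU : C ⊆ U) {p : E} (hp : p ∈ C) (hfp : f =ᶠ[𝓝 p] 0) : EqOn f 0 C := by
  suffices C ⊆ {z | f =ᶠ[𝓝 z] 0} from fun z hz => (this hz).self_of_nhds
  refine hC.subset_of_closure_inter_subset isOpen_setOfPred_eventually_nhds ⟨p, hp, hfp⟩ ?_
  rintro z ⟨hz_cl, hzC⟩
  obtain ⟨s, hs, hsU⟩ := isOpen_iff.1 hU z (hCU hzC)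
  obtain ⟨q, hq_ball, hq⟩ := mem_closure_iff.1 hz_cl _ isOpen_ball (mem_ball_self hs)
  exact eventually_of_mem (ball_mem_nhds z hs) <|
    (hf.mono hsU).eqOn_zero_of_convex_of_eventuallyEq_zero isOpen_ball (convex_ball z s)
      hq_ball hq

end IdentityTheorem

/-- Identity theorem: a (real) holomorphic vector field `f` on an open set
`U ⊆ ℂⁿ` that vanishes on the maximal-dimensional totally real submanifold
`U ∩ ℝⁿ` vanishes identically on the connected component of `U` containing it. -/
theorem stmt_14 (n : ℕ) (U : Set (Fin n → ℂ)) (hU : IsOpen U)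
    (f : (Fin n → ℂ) → (Fin n → ℂ))
    (hf : DifferentiableOn ℂ f U)
    (p₀ : Fin n → ℂ) (hp₀ : p₀ ∈ U) (hp₀real : ∀ k, (p₀ k).im = 0)
    (hvanish : ∀ z ∈ U, (∀ k, (z k).im = 0) → f z = 0) :
    ∀ z ∈ connectedComponentIn U p₀, f z = 0 := by
  obtain ⟨r, hr, hrU⟩ := isOpen_iff.1 hU p₀ hp₀
  have hball : EqOn f 0 (ball p₀ r) :=
    (hf.mono hrU).eqOn_zero_ball_of_im_eq_zero hp₀real fun z hz => hvanish z (hrU hz)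
  have hnear : f =ᶠ[𝓝 p₀] 0 := eventually_of_mem (ball_mem_nhds p₀ hr) hball
  exact hf.eqOn_zero_of_isPreconnected_of_eventuallyEq_zero hU isPreconnected_connectedComponentIn
    (connectedComponentIn_subset U p₀) (mem_connectedComponentIn hp₀) hnear
end

section
/- Let 𝔭 be a real vector space with complex structure j and an anti-Kaehlerian inner product, let 𝔞 be an abelian subspace (for a curvature-like bracket) acting on 𝔭 via operators ad(a)², with root space decomposition 𝔭 = 𝔞 ⊕ Σ_{α∈Δ₊} 𝔭_α where ad(a)²X = α^ℂ(a)²X for X ∈ 𝔭_α, a ∈ 𝔞. Let u ∈ 𝔞 with α^ℂ(u) ≠ 0 for all α ∈ Δ₊, let M be the orbit of u under a group K acting by isometries preserving this structure with T_uM = Σ_{α∈Δ₊} 𝔭_α and T_u^⊥M = 𝔞. Then for v ∈ 𝔞 the shape operator of M satisfies A_v|_{𝔭_α} = −(α^ℂ(v)/α^ℂ(u))·id, and in particular A_v is complex-diagonalizable with respect to the decomposition into the 𝔭_α. -/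
/-!
The key identity is the polarization `⁅z, ⁅w, X⁆⁆ = α(z) α(w) · X` of the root relation on the
abelian `𝔞`, with `ℂ` acting through `j`. Since `α(𝔞)` is a nonzero complex subspace of `ℂ`,
there is `w ∈ 𝔞` with `α(w) = α(u)⁻¹`; then `η := ξ + ⁅w, X⁆ ∈ 𝔨` satisfies
`⁅η, u⁆ = X - α(u) α(w) · X = 0`, so `η` centralizes `v`, and
`⁅ξ, v⁆ = ⁅v, ⁅w, X⁆⁆ = (α(v) / α(u)) · X`.
-/

open Complex

section ComplexStructure

variable {L : Type*} [AddCommGroup L] [Module ℝ L]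

/-- `c ↦ c • X` for the complex structure on `L` given by `j`. -/
def complexSmul (j : Module.End ℝ L) (X : L) : ℂ →ₗ[ℝ] L :=
  reLm.smulRight X + imLm.smulRight (j X)

theorem complexSmul_apply (j : Module.End ℝ L) (X : L) (c : ℂ) :
    complexSmul j X c = c.re • X + c.im • j X :=
  rfl

theorem complexSmul_one (j : Module.End ℝ L) (X : L) : complexSmul j X 1 = X := by
  simp [complexSmul_apply]

theorem exists_mem_apply_eq {j : Module.End ℝ L} {a : Submodule ℝ L}
    (hja : ∀ x ∈ a, j x ∈ a) {α : L →ₗ[ℝ] ℂ} (hαj : ∀ x ∈ a, α (j x) = I * α x)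
    {u : L} (hu : u ∈ a) (hαu : α u ≠ 0) (c : ℂ) : ∃ w ∈ a, α w = c := by
  set d := c / α u
  refine ⟨d.re • u + d.im • j u, a.add_mem (a.smul_mem _ hu) (a.smul_mem _ (hja u hu)), ?_⟩
  calc α (d.re • u + d.im • j u) = (d.re + d.im * I) * α u := by
        rw [map_add, map_smul, map_smul, hαj u hu, real_smul, real_smul]; ring
    _ = c := by rw [re_add_im, div_mul_cancel₀ c hαu]

end ComplexStructure

section Polarization

variable {L : Type*} [LieRing L] [LieAlgebra ℝ L]

theorem lie_lie_eq_complexSmul_mul {a : Submodule ℝ L}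
    (habelian : ∀ x ∈ a, ∀ y ∈ a, ⁅x, y⁆ = 0) (j : Module.End ℝ L) (α : L →ₗ[ℝ] ℂ) {X : L}
    (hroot : ∀ z ∈ a, ⁅z, ⁅z, X⁆⁆ = complexSmul j X (α z ^ 2))
    {z w : L} (hz : z ∈ a) (hw : w ∈ a) :
    ⁅z, ⁅w, X⁆⁆ = complexSmul j X (α z * α w) := by
  have hcomm : ⁅w, ⁅z, X⁆⁆ = ⁅z, ⁅w, X⁆⁆ := by
    rw [leibniz_lie z w X, habelian z hz w hw, zero_lie, zero_add]
  have hexpand : ⁅z + w, ⁅z + w, X⁆⁆ = ⁅z, ⁅z, X⁆⁆ + ⁅w, ⁅w, X⁆⁆ + (2 : ℝ) • ⁅z, ⁅w, X⁆⁆ := by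
    simp only [add_lie, lie_add, hcomm, two_smul]; abel
  have hsq : complexSmul j X ((α z + α w) ^ 2) = complexSmul j X (α z ^ 2)
      + complexSmul j X (α w ^ 2) + (2 : ℝ) • complexSmul j X (α z * α w) := by
    have hpoly : (α z + α w) ^ 2 = α z ^ 2 + α w ^ 2 + (2 : ℝ) • (α z * α w) := by
      rw [real_smul]; push_cast; ring
    rw [hpoly, map_add, map_add, map_smul]
  have h2 := hroot (z + w) (a.add_mem hz hw)
  rw [hexpand, map_add, hsq, hroot z hz, hroot w hw, add_right_inj] at h2
  exact smul_right_injective L (two_ne_zero : (2 : ℝ) ≠ 0) h2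

end Polarization

theorem stmt_15_general {L : Type*} [LieRing L] [LieAlgebra ℝ L]
    (k p : Submodule ℝ L)
    (hpp : ∀ x ∈ p, ∀ y ∈ p, ⁅x, y⁆ ∈ k)
    (j : Module.End ℝ L)
    (a : Submodule ℝ L) (hap : a ≤ p)
    (habelian : ∀ x ∈ a, ∀ y ∈ a, ⁅x, y⁆ = 0)
    (hja : ∀ x ∈ a, j x ∈ a)
    {ι : Type*} (αc : ι → (L →ₗ[ℝ] ℂ))
    (hαj : ∀ i, ∀ x ∈ a, αc i (j x) = Complex.I * αc i x)
    (pα : ι → Submodule ℝ L) (hpα : ∀ i, pα i ≤ p)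
    (hroot : ∀ i, ∀ X ∈ pα i, ∀ z ∈ a,
      ⁅z, ⁅z, X⁆⁆ = ((αc i z) ^ 2).re • X + ((αc i z) ^ 2).im • j X)
    (u : L) (hu : u ∈ a) (hreg : ∀ i, αc i u ≠ 0)
    (v : L) (hv : v ∈ a)
    (hcent : ∀ ξ ∈ k, ⁅ξ, u⁆ = 0 → ∀ w ∈ a, ⁅ξ, w⁆ = 0) :
    ∀ i, ∀ X ∈ pα i, ∀ ξ ∈ k, ⁅ξ, u⁆ = X →
      ⁅ξ, v⁆ = (αc i v / αc i u).re • X + (αc i v / αc i u).im • j X := by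
  intro i X hX ξ hξ hξu
  have hpol : ∀ {z w : L}, z ∈ a → w ∈ a → ⁅z, ⁅w, X⁆⁆ = complexSmul j X (αc i z * αc i w) :=
    lie_lie_eq_complexSmul_mul habelian j (αc i) (hroot i X hX)
  obtain ⟨w, hw, hαw⟩ := exists_mem_apply_eq hja (hαj i) hu (hreg i) (αc i u)⁻¹
  have hη : ξ + ⁅w, X⁆ ∈ k := k.add_mem hξ (hpp w (hap hw) X (hpα i hX))
  have hηu : ⁅ξ + ⁅w, X⁆, u⁆ = 0 := by
    rw [add_lie, hξu, ← lie_skew, hpol hu hw, hαw, mul_inv_cancel₀ (hreg i), complexSmul_one,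
      add_neg_cancel]
  have hηv := hcent _ hη hηu v hv
  rw [add_lie, ← lie_skew ⁅w, X⁆ v, hpol hv hw, hαw, ← sub_eq_add_neg, sub_eq_zero,
    ← div_eq_mul_inv] at hηv
  exact hηv

/-- Principal orbits of an aks-representation are proper anti-Kaehlerian
isoparametric: in the root space decomposition `𝔭 = 𝔞 ⊕ Σ_α 𝔭_α` (with complex
roots `α^ℂ`), for a regular point `u ∈ 𝔞` and a normal vector `v ∈ 𝔞`, the shape
operator `A_v` of the orbit `M = K·u` acts on `𝔭_α` as the complex scalar
`-(α^ℂ(v)/α^ℂ(u))`.  Tangent vectors of `M` at `u` are realized as `X = ⁅ξ, u⁆`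
(`ξ ∈ 𝔨`) and `A_v X = -⁅ξ, v⁆`; the conclusion states
`⁅ξ, v⁆ = (α^ℂ(v)/α^ℂ(u)) • X` (complex scalar multiplication via `j`), so `A_v`
is complex-diagonalizable with the stated eigenvalues. -/
theorem stmt_15 {L : Type*} [LieRing L] [LieAlgebra ℝ L]
    (k p : Submodule ℝ L)
    (hkp : ∀ x ∈ k, ∀ y ∈ p, ⁅x, y⁆ ∈ p)
    (hpp : ∀ x ∈ p, ∀ y ∈ p, ⁅x, y⁆ ∈ k)
    (j : Module.End ℝ L) (hjp : ∀ x ∈ p, j x ∈ p)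
    (hj : ∀ x ∈ p, j (j x) = -x)
    (a : Submodule ℝ L) (hap : a ≤ p)
    (habelian : ∀ x ∈ a, ∀ y ∈ a, ⁅x, y⁆ = 0)
    (hja : ∀ x ∈ a, j x ∈ a)
    {ι : Type*} (αc : ι → (L →ₗ[ℝ] ℂ))
    (hαj : ∀ i, ∀ x ∈ a, αc i (j x) = Complex.I * αc i x)
    (pα : ι → Submodule ℝ L) (hpα : ∀ i, pα i ≤ p)
    (hroot : ∀ i, ∀ X ∈ pα i, ∀ z ∈ a,
      ⁅z, ⁅z, X⁆⁆ = ((αc i z) ^ 2).re • X + ((αc i z) ^ 2).im • j X)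
    (hdecomp : p ≤ a ⊔ ⨆ i, pα i)
    (u : L) (hu : u ∈ a) (hreg : ∀ i, αc i u ≠ 0)
    (v : L) (hv : v ∈ a)
    (hcent : ∀ ξ ∈ k, ⁅ξ, u⁆ = 0 → ∀ w ∈ a, ⁅ξ, w⁆ = 0) :
    ∀ i, ∀ X ∈ pα i, ∀ ξ ∈ k, ⁅ξ, u⁆ = X →
      ⁅ξ, v⁆ = (αc i v / αc i u).re • X + (αc i v / αc i u).im • j X :=
  stmt_15_general k p hpp j a hap habelian hja αc hαj pα hpα hroot u hu hreg v hv hcent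
end
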